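/- Let m > 1 be an integer. The map h/k ↦ (k−h)/h is an order-reversing bijection from F^{≥1/2}(B(2m),m) onto the Farey sequence F_m, and the map h/k ↦ k/(k+h) is its inverse, an order-reversing bijection from F_m onto F^{≥1/2}(B(2m),m). (Here h/k denotes a fraction in lowest terms.) -/

import Mathlib

/-- The Farey sequence `F_n` of order `n`, viewed as the set of rationals `q`
with `0 ≤ q ≤ 1` whose lowest-terms denominator is at most `n`. -/
def Farey (n : ℕ) : Set ℚ :=
  {q : ℚ | 0 ≤ q ∧ q ≤ 1 ∧ q.den ≤ n}

/-- The Farey subsequence `F(B(n),m)`: fractions `h/k ∈ F_n` in lowest terms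
with `h ≤ m` and `k - h ≤ n - m`. -/
def FareyB (n m : ℕ) : Set ℚ :=
  {q : ℚ | 0 ≤ q ∧ q ≤ 1 ∧ q.den ≤ n ∧ q.num ≤ (m : ℤ) ∧
    (q.den : ℤ) - q.num ≤ (n : ℤ) - (m : ℤ)}

/-- `f'` is the predecessor of `f` in the set `S` of rationals. -/
def IsPredIn (S : Set ℚ) (f' f : ℚ) : Prop :=
  f' ∈ S ∧ f ∈ S ∧ f' < f ∧ ∀ g ∈ S, ¬(f' < g ∧ g < f)

/-- `f'` is the successor of `f` in the set `S` of rationals. -/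
def IsSuccIn (S : Set ℚ) (f f' : ℚ) : Prop :=
  f ∈ S ∧ f' ∈ S ∧ f < f' ∧ ∀ g ∈ S, ¬(f < g ∧ g < f')

/-- The right halfsequence `F^{≥1/2}(B(2m),m)`. -/
def FareyBRight (m : ℕ) : Set ℚ := {q ∈ FareyB (2 * m) m | 1 / 2 ≤ q}

/-- On a fraction `q = h/k` in lowest terms, the map `h/k ↦ (k-h)/h`. -/
def phi (q : ℚ) : ℚ := ((q.den : ℚ) - (q.num : ℚ)) / (q.num : ℚ)

/-- On a fraction `q = h/k` in lowest terms, the map `h/k ↦ k/(k+h)`. -/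
def psi (q : ℚ) : ℚ := (q.den : ℚ) / ((q.den : ℚ) + (q.num : ℚ))

/-! On rationals, `phi q = q⁻¹ - 1` and `psi q = (1 + q)⁻¹`: two decreasing Möbius maps, inverse
to each other. Since `gcd (k - h, h) = gcd (k, k + h) = gcd (h, k)`, the fractions `(k - h)/h` and
`k/(k + h)` are again in lowest terms, so the bounds `h ≤ m`, `k - h ≤ m` defining the right
halfsequence become exactly the bound `k ≤ m` defining `F_m`, and conversely. -/

lemma phi_eq_inv_sub_one {q : ℚ} (hq : q ≠ 0) : phi q = q⁻¹ - 1 := by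
  have hnum : (q.num : ℚ) ≠ 0 := by exact_mod_cast Rat.num_ne_zero.mpr hq
  conv_rhs => rw [← Rat.num_div_den q]
  rw [phi, inv_div, sub_div, div_self hnum]

lemma psi_eq_inv_one_add (q : ℚ) : psi q = (1 + q)⁻¹ := by
  have hden : (q.den : ℚ) ≠ 0 := by positivity
  conv_rhs => rw [← Rat.num_div_den q]
  rw [psi, one_add_div hden, inv_div]

lemma psi_phi {q : ℚ} (hq : q ≠ 0) : psi (phi q) = q := by
  rw [psi_eq_inv_one_add, phi_eq_inv_sub_one hq, add_sub_cancel, inv_inv]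

lemma phi_psi {q : ℚ} (hq : q ≠ -1) : phi (psi q) = q := by
  have h : 1 + q ≠ 0 := fun h => hq (by linarith)
  rw [psi_eq_inv_one_add, phi_eq_inv_sub_one (inv_ne_zero h), inv_inv, add_sub_cancel_left]

lemma phi_strictAntiOn : StrictAntiOn phi (Set.Ioi 0) := by
  intro a ha b _ hab
  rw [phi_eq_inv_sub_one (ne_of_gt ha), phi_eq_inv_sub_one (ne_of_gt (ha.out.trans hab))]
  exact sub_lt_sub_right (inv_strictAnti₀ ha hab) 1

lemma psi_strictAntiOn : StrictAntiOn psi (Set.Ioi (-1)) := by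
  intro a ha b _ hab
  rw [psi_eq_inv_one_add, psi_eq_inv_one_add]
  exact inv_strictAnti₀ (by linarith [ha.out]) (by linarith)

lemma num_den_div_of_isCoprime {a b : ℤ} (hb : 0 < b) (h : IsCoprime a b) :
    (a / b : ℚ).num = a ∧ ((a / b : ℚ).den : ℤ) = b := by
  rw [Int.isCoprime_iff_nat_coprime] at h
  exact ⟨Rat.num_div_eq_of_coprime hb h, Rat.den_div_eq_of_coprime hb h⟩

lemma den_phi {q : ℚ} (hq : 0 < q) : ((phi q).den : ℤ) = q.num := by
  have hcop : IsCoprime ((q.den : ℤ) - q.num) q.num := by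
    simpa [sub_eq_add_neg] using q.isCoprime_num_den.symm.add_mul_left_left (-1)
  have hphi : phi q = (((q.den : ℤ) - q.num : ℤ) : ℚ) / (q.num : ℚ) := by
    rw [phi]; push_cast; rfl
  rw [hphi]
  exact (num_den_div_of_isCoprime (Rat.num_pos.mpr hq) hcop).2

lemma num_den_psi {q : ℚ} (hq : 0 ≤ q) :
    (psi q).num = q.den ∧ ((psi q).den : ℤ) = q.den + q.num := by
  have hpos : 0 < (q.den : ℤ) + q.num := by
    have := Rat.num_nonneg.mpr hq; have := q.pos; omega
  have hcop : IsCoprime (q.den : ℤ) (q.den + q.num) := by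
    simpa [add_comm] using q.isCoprime_num_den.symm.add_mul_left_right 1
  have hpsi : psi q = ((q.den : ℤ) : ℚ) / (((q.den : ℤ) + q.num : ℤ) : ℚ) := by
    rw [psi]; push_cast; rfl
  rw [hpsi]
  exact num_den_div_of_isCoprime hpos hcop

lemma pos_of_mem_fareyBRight {m : ℕ} {q : ℚ} (hq : q ∈ FareyBRight m) : 0 < q :=
  lt_of_lt_of_le (by norm_num) hq.2

lemma neg_one_lt_of_mem_farey {m : ℕ} {q : ℚ} (hq : q ∈ Farey m) : -1 < q := by
  linarith [hq.1]

lemma phi_mem_farey {m : ℕ} {q : ℚ} (hq : q ∈ FareyBRight m) : phi q ∈ Farey m := by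
  have hq0 := pos_of_mem_fareyBRight hq
  obtain ⟨⟨-, hq1, -, hnum, -⟩, hhalf⟩ := hq
  have hden := den_phi hq0
  refine ⟨?_, ?_, by omega⟩
  · rw [phi_eq_inv_sub_one hq0.ne', sub_nonneg]
    exact (one_le_inv₀ hq0).mpr hq1
  · have := inv_anti₀ (by norm_num) hhalf
    rw [phi_eq_inv_sub_one hq0.ne']
    norm_num at this
    linarith

lemma psi_mem_fareyBRight {m : ℕ} {q : ℚ} (hq : q ∈ Farey m) : psi q ∈ FareyBRight m := by
  obtain ⟨hq0, hq1, hden⟩ := hq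
  have hnd : q.num ≤ q.den := Rat.num_le_denom_iff.mpr hq1
  obtain ⟨hnum', hden'⟩ := num_den_psi hq0
  have hpos : (0 : ℚ) < 1 + q := by linarith
  refine ⟨⟨?_, ?_, ?_, ?_, ?_⟩, ?_⟩
  · rw [psi_eq_inv_one_add]; positivity
  · rw [psi_eq_inv_one_add]; exact inv_le_one_of_one_le₀ (by linarith)
  · omega
  · omega
  · push_cast; omega
  · rw [psi_eq_inv_one_add, le_inv_comm₀ (by norm_num) hpos]
    norm_num
    linarith

theorem stmt_5_general (m : ℕ) :
    (∀ q ∈ FareyBRight m, phi q ∈ Farey m) ∧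
    (∀ q ∈ Farey m, psi q ∈ FareyBRight m) ∧
    (∀ q ∈ FareyBRight m, psi (phi q) = q) ∧
    (∀ q ∈ Farey m, phi (psi q) = q) ∧
    (∀ q ∈ FareyBRight m, ∀ q' ∈ FareyBRight m, q < q' → phi q' < phi q) ∧
    (∀ q ∈ Farey m, ∀ q' ∈ Farey m, q < q' → psi q' < psi q) :=
  ⟨fun _ hq => phi_mem_farey hq,
    fun _ hq => psi_mem_fareyBRight hq,
    fun _ hq => psi_phi (pos_of_mem_fareyBRight hq).ne',
    fun _ hq => phi_psi (neg_one_lt_of_mem_farey hq).ne',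
    fun _ hq _ hq' h => phi_strictAntiOn (pos_of_mem_fareyBRight hq) (pos_of_mem_fareyBRight hq') h,
    fun _ hq _ hq' h =>
      psi_strictAntiOn (neg_one_lt_of_mem_farey hq) (neg_one_lt_of_mem_farey hq') h⟩

/-- For `m > 1`, the map `h/k ↦ (k-h)/h` is an order-reversing bijection from
`F^{≥1/2}(B(2m),m)` onto `F_m`, with order-reversing inverse `h/k ↦ k/(k+h)`. -/
theorem stmt_5 (m : ℕ) (hm : 1 < m) :
    (∀ q ∈ FareyBRight m, phi q ∈ Farey m) ∧
    (∀ q ∈ Farey m, psi q ∈ FareyBRight m) ∧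
    (∀ q ∈ FareyBRight m, psi (phi q) = q) ∧
    (∀ q ∈ Farey m, phi (psi q) = q) ∧
    (∀ q ∈ FareyBRight m, ∀ q' ∈ FareyBRight m, q < q' → phi q' < phi q) ∧
    (∀ q ∈ Farey m, ∀ q' ∈ Farey m, q < q' → psi q' < psi q) :=
  stmt_5_general m
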